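/- arXiv:2404.16468 — 3 statements merged into one kernel-verified Lean document; each statement's English description precedes it below -/
import Mathlib

section
/- Assume the constrained dual LP is feasible. Let (d*, p*) be an optimal solution of the constrained dual LP with derived policy π*(a|s) = p*(s,a)/d*(s), and let (v*, q*, w*) be an optimal solution of the constrained primal LP. Then π* is greedy with respect to the optimal adjusted value function: for every state s, every action a with π*(a|s) > 0 satisfies a ∈ argmax_{a'} q*(s,a'). -/
open Finset

section MDPDefs

variable {S A : Type*}

/-- A (stationary, stochastic) policy on finite state/action spaces. -/
def IsPolicy [Fintype A] (π : S → A → ℝ) : Prop :=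
  (∀ s a, 0 ≤ π s a) ∧ ∀ s, ∑ a, π s a = 1

/-- `d` is the (discounted) state visitation density of the policy `π`:
it satisfies `d(s) = (1-γ)ι(s) + γ Σ_{s',a'} d(s') π(a'|s') τ(s|s',a')`. -/
def IsVisit [Fintype S] [Fintype A] (ι : S → ℝ) (τ : S → A → S → ℝ) (γ : ℝ)
    (π : S → A → ℝ) (d : S → ℝ) : Prop :=
  ∀ s, d s = (1 - γ) * ι s + γ * ∑ s', ∑ a', d s' * π s' a' * τ s' a' s

/-- Feasibility for the value-learning dual LP. -/
def DualFeas [Fintype S] [Fintype A] (ι : S → ℝ) (τ : S → A → S → ℝ) (γ : ℝ)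
    (d : S → ℝ) (p : S → A → ℝ) : Prop :=
  (∀ s, ∑ a, p s a = d s) ∧
  (∀ s, d s = (1 - γ) * ι s + γ * ∑ s', ∑ a', p s' a' * τ s' a' s) ∧
  ∀ s a, 0 ≤ p s a

/-- The dual objective: the average reward under the state-action density `p`,
`Σ_{s,a} p(s,a) Σ_{s'} τ(s'|s,a) r(s,a,s')`. -/
def DualObj [Fintype S] [Fintype A] (τ : S → A → S → ℝ) (r : S → A → S → ℝ)
    (p : S → A → ℝ) : ℝ :=
  ∑ s, ∑ a, p s a * ∑ s', τ s a s' * r s a s'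

/-- The standing MDP assumptions: `ι` is an everywhere-positive initial-state
distribution, `τ(·|s,a)` are transition probabilities and `γ ∈ [0,1)`. -/
def IsMDP [Fintype S] [Fintype A] (ι : S → ℝ) (τ : S → A → S → ℝ) (γ : ℝ) : Prop :=
  (∀ s, 0 < ι s) ∧ (∑ s, ι s = 1) ∧
  (∀ s a s', 0 ≤ τ s a s') ∧ (∀ s a, ∑ s', τ s a s' = 1) ∧
  0 ≤ γ ∧ γ < 1

end MDPDefs

open Finset Filter

/-!
For dual-feasible `p` and any `v`, the dual objective of the reward `r + Σ w_k r_k` equals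
`(1-γ) Σ ι v` minus the gap `Σ p(s,a) (v(s) - q(s,a))`, whose terms are nonnegative when
`(v, q, w)` is primal feasible. Hence the theorem reduces to strong duality: the primal optimum
`P` is at most the dual optimum. For each `w ≥ 0` the Bellman fixed point of `r + Σ w_k r_k` is
primal feasible and is attained by the occupancy measure of a greedy deterministic policy, so `P`
is bounded by the Lagrangian of some deterministic policy. Ville's theorem of the alternative over
the finitely many deterministic policies turns this into a mixture of their occupancy measures
that is dual feasible with objective at least `P`.
-/

theorem ville_alternative {G I : Type*} [Fintype G] [Fintype I] (z : G → I → ℝ) :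
    (∃ μ ∈ stdSimplex ℝ G, 0 ≤ ∑ g, μ g • z g) ∨
      ∃ y : I → ℝ, 0 ≤ y ∧ ∀ g, ∑ i, y i * z g i < 0 := by
  classical
  refine or_iff_not_imp_left.2 fun hno => ?_
  set L := Fintype.linearCombination ℝ z
  have hdisj : Disjoint (L '' stdSimplex ℝ G) (ProperCone.positive ℝ (I → ℝ)) := by
    refine Set.disjoint_left.2 ?_
    rintro _ ⟨μ, hμ, rfl⟩ hpos
    exact hno ⟨μ, hμ, by simpa [L, Fintype.linearCombination_apply] using hpos⟩
  obtain ⟨f, hf0, hfX⟩ := (ProperCone.positive ℝ (I → ℝ)).hyperplane_separation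
    ((convex_stdSimplex ℝ G).linear_image L)
    ((isCompact_stdSimplex ℝ G).image L.continuous_of_finiteDimensional) hdisj
  refine ⟨fun i => f (Pi.single i 1), fun i => hf0 _ (Pi.single_nonneg.2 zero_le_one),
    fun g => ?_⟩
  have hg : f (z g) < 0 := by
    simpa [L, Fintype.linearCombination_apply, Pi.single_apply] using
      hfX _ ⟨_, single_mem_stdSimplex ℝ g, rfl⟩
  have hz : z g = ∑ i, z g i • Pi.single i 1 := by
    ext j
    simp [Pi.single_apply]
  rw [hz] at hg
  simpa [map_sum, mul_comm] using hg

theorem exists_nonneg_forall_add_mul_neg {G : Type*} [Finite G] (a b : G → ℝ)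
    (ha : ∀ g, a g < 0) : ∃ t : ℝ, 0 ≤ t ∧ ∀ g, b g + t * a g < 0 := by
  have hev : ∀ g, ∀ᶠ t in atTop, b g + t * a g < 0 := fun g =>
    (tendsto_atBot_add_const_left _ (b g)
      (tendsto_id.atTop_mul_const_of_neg (ha g))).eventually_lt_atBot 0
  exact ((eventually_all.2 hev).and (eventually_ge_atTop 0)).exists.imp fun t ht => ⟨ht.2, ht.1⟩

theorem exists_mem_stdSimplex_of_forall_exists_le {G κ : Type*} [Fintype G] [Fintype κ]
    (R : G → ℝ) (c : G → κ → ℝ) (P : ℝ)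
    (h : ∀ w : κ → ℝ, 0 ≤ w → ∃ g, P ≤ R g + ∑ k, w k * c g k) :
    ∃ μ ∈ stdSimplex ℝ G, (∀ k, 0 ≤ ∑ g, μ g * c g k) ∧ P ≤ ∑ g, μ g * R g := by
  -- coordinate `none` carries the objective `R g - P`, coordinate `some k` the constraint `c g k`
  rcases ville_alternative (fun g (i : Option κ) => i.elim (R g - P) (c g)) with
    ⟨μ, hμ, hz⟩ | ⟨y, hy, hneg⟩
  · refine ⟨μ, hμ, fun k => by simpa using hz (some k), ?_⟩
    have := hz none
    simp only [Pi.zero_apply, Finset.sum_apply, Pi.smul_apply, Option.elim_none, smul_eq_mul,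
      mul_sub, sum_sub_distrib, ← sum_mul, hμ.2, one_mul, sub_nonneg] at this
    exact this
  · exfalso
    simp only [Fintype.sum_option, Option.elim_none, Option.elim_some] at hneg
    set β := y none
    set u : κ → ℝ := fun k => y (some k)
    have hu : 0 ≤ u := fun k => hy (some k)
    rcases (hy none).eq_or_lt with hβ | hβ
    · obtain ⟨t, ht, hlt⟩ := exists_nonneg_forall_add_mul_neg (fun g => ∑ k, u k * c g k)
        (fun g => R g - P) (fun g => by simpa [β, u, ← hβ] using hneg g)
      obtain ⟨g, hg⟩ := h (t • u) (smul_nonneg ht hu)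
      simp only [Pi.smul_apply, smul_eq_mul, mul_assoc, ← mul_sum] at hg
      linarith [hlt g]
    · obtain ⟨g, hg⟩ := h (β⁻¹ • u) (smul_nonneg (inv_nonneg.2 hβ.le) hu)
      simp only [Pi.smul_apply, smul_eq_mul, mul_assoc, ← mul_sum] at hg
      have := mul_le_mul_of_nonneg_left hg hβ.le
      rw [mul_add, mul_inv_cancel_left₀ hβ.ne'] at this
      linarith [hneg g]

theorem exists_nonneg_eq_add_mul_sum {S : Type*} [Fintype S] (M : S → S → ℝ)
    (hM0 : ∀ s s', 0 ≤ M s s') (hM1 : ∀ s, ∑ s', M s s' = 1) {γ : ℝ} (hγ0 : 0 ≤ γ)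
    (hγ1 : γ < 1) {b : S → ℝ} (hb : 0 ≤ b) :
    ∃ x : S → ℝ, 0 ≤ x ∧ ∀ s, x s = b s + γ * ∑ s', x s' * M s' s := by
  -- `x ↦ b + γ Mᵀ x` contracts the ℓ¹ distance, since the rows of `M` sum to one
  let F : PiLp 1 (fun _ : S => ℝ) → PiLp 1 (fun _ : S => ℝ) :=
    fun x => WithLp.toLp 1 fun s => b s + γ * ∑ s', x s' * M s' s
  have hF : ContractingWith ⟨γ, hγ0⟩ F := by
    refine ⟨by exact_mod_cast hγ1, LipschitzWith.of_dist_le_mul fun x y => ?_⟩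
    change dist (F x) (F y) ≤ γ * dist x y
    simp only [PiLp.dist_eq_of_L1, Real.dist_eq, F]
    calc ∑ s, |b s + γ * ∑ s', x s' * M s' s - (b s + γ * ∑ s', y s' * M s' s)|
        = ∑ s, γ * |∑ s', (x s' - y s') * M s' s| := by
          refine sum_congr rfl fun s _ => ?_
          rw [← abs_of_nonneg hγ0, ← abs_mul, abs_of_nonneg hγ0]
          simp only [sub_mul, sum_sub_distrib]
          ring_nf
      _ ≤ ∑ s, γ * ∑ s', |x s' - y s'| * M s' s := by
          gcongr with s
          refine (abs_sum_le_sum_abs _ _).trans_eq (sum_congr rfl fun s' _ => ?_)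
          rw [abs_mul, abs_of_nonneg (hM0 s' s)]
      _ = γ * ∑ s', |x s' - y s'| := by
          simp only [← mul_sum]
          rw [sum_comm]
          simp only [← mul_sum, hM1, mul_one]
  let K := {x : PiLp 1 (fun _ : S => ℝ) | ∀ s, 0 ≤ x s}
  have hK : IsClosed K := by
    simp only [K, Set.ofPred_forall]
    exact isClosed_iInter fun s => isClosed_le continuous_const (PiLp.continuous_apply 1 _ s)
  have hFK : Set.MapsTo F K K := fun x hx s =>
    add_nonneg (hb s) (mul_nonneg hγ0 (sum_nonneg fun s' _ => mul_nonneg (hx s') (hM0 s' s)))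
  obtain ⟨x, hx, hfix, -⟩ := ContractingWith.exists_fixedPoint' hK.isComplete hFK
    (hF.restrict hFK) (x := 0) (fun _ => le_rfl) (edist_ne_top _ _)
  exact ⟨fun s => x s, hx, fun s => (congrArg (fun y => y s) hfix).symm⟩

def lagrangeReward {S A κ : Type*} [Fintype κ] (r : S → A → S → ℝ) (rk : κ → S → A → S → ℝ)
    (w : κ → ℝ) : S → A → S → ℝ :=
  fun s a s' => r s a s' + ∑ k, w k * rk k s a s'

theorem isPolicy_single {S A : Type*} [Fintype A] [DecidableEq A] (g : S → A) :
    IsPolicy fun s => Pi.single (g s) (1 : ℝ) :=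
  ⟨fun s => (Pi.single_nonneg.2 zero_le_one : (0 : A → ℝ) ≤ Pi.single (g s) 1), fun s => by simp⟩

section Bellman

variable {S A : Type*} [Fintype S] {τ : S → A → S → ℝ} {γ : ℝ}

variable (τ γ) in
def bellmanQ (ρ : S → A → S → ℝ) (v : S → ℝ) (s : S) (a : A) : ℝ :=
  ∑ s', τ s a s' * (ρ s a s' + γ * v s')

theorem bellmanQ_le_add_dist (hτ0 : ∀ s a s', 0 ≤ τ s a s') (hτ1 : ∀ s a, ∑ s', τ s a s' = 1)
    (hγ0 : 0 ≤ γ) (ρ : S → A → S → ℝ) (u w : S → ℝ) (s : S) (a : A) :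
    bellmanQ τ γ ρ u s a ≤ bellmanQ τ γ ρ w s a + γ * dist u w := by
  have hdist : ∑ s', τ s a s' * (u s' - w s') ≤ dist u w := by
    calc ∑ s', τ s a s' * (u s' - w s') ≤ ∑ s', τ s a s' * dist u w := by
          gcongr with s'
          · exact hτ0 s a s'
          · exact (le_abs_self _).trans ((Real.dist_eq _ _).symm.trans_le (dist_le_pi_dist u w s'))
      _ = dist u w := by rw [← sum_mul, hτ1, one_mul]
  have hdiff : bellmanQ τ γ ρ u s a - bellmanQ τ γ ρ w s a =
      γ * ∑ s', τ s a s' * (u s' - w s') := by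
    simp only [bellmanQ, ← sum_sub_distrib, mul_sum]
    exact sum_congr rfl fun s' _ => by ring
  nlinarith

theorem exists_bellman_fixedPoint [Fintype A] [Nonempty A] (hτ0 : ∀ s a s', 0 ≤ τ s a s')
    (hτ1 : ∀ s a, ∑ s', τ s a s' = 1) (hγ0 : 0 ≤ γ) (hγ1 : γ < 1) (ρ : S → A → S → ℝ) :
    ∃ v : S → ℝ, (∀ s a, bellmanQ τ γ ρ v s a ≤ v s) ∧ ∀ s, ∃ a, bellmanQ τ γ ρ v s a = v s := by
  let T : (S → ℝ) → S → ℝ := fun v s => univ.sup' univ_nonempty (bellmanQ τ γ ρ v s)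
  have hT_le : ∀ u w s, T u s ≤ T w s + γ * dist u w := fun u w s =>
    sup'_le _ _ fun a _ => (bellmanQ_le_add_dist hτ0 hτ1 hγ0 ρ u w s a).trans <|
      add_le_add_left (le_sup' (bellmanQ τ γ ρ w s) (mem_univ a)) _
  have hT : ContractingWith ⟨γ, hγ0⟩ T := by
    refine ⟨by exact_mod_cast hγ1, LipschitzWith.of_dist_le_mul fun u w => ?_⟩
    change dist (T u) (T w) ≤ γ * dist u w
    refine (dist_pi_le_iff (mul_nonneg hγ0 dist_nonneg)).2 fun s => ?_
    have h₁ := hT_le u w s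
    have h₂ := hT_le w u s
    rw [dist_comm] at h₂
    rw [Real.dist_eq, abs_sub_le_iff]
    constructor <;> linarith
  set v := hT.fixedPoint T
  have hv : ∀ s, T v s = v s := congrFun hT.fixedPoint_isFixedPt
  refine ⟨v, fun s a => (le_sup' (bellmanQ τ γ ρ v s) (mem_univ a)).trans_eq (hv s), fun s => ?_⟩
  obtain ⟨a, -, ha⟩ := exists_mem_eq_sup' univ_nonempty (bellmanQ τ γ ρ v s)
  exact ⟨a, ha.symm.trans (hv s)⟩

end Bellman

section Duality

variable {S A : Type*} [Fintype S] [Fintype A] {ι : S → ℝ} {τ : S → A → S → ℝ} {γ : ℝ}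

theorem dualObj_eq_sub_sum_mul_sub_bellmanQ {d : S → ℝ} {p : S → A → ℝ}
    (hsum : ∀ s, ∑ a, p s a = d s)
    (hflow : ∀ s, d s = (1 - γ) * ι s + γ * ∑ s', ∑ a', p s' a' * τ s' a' s)
    (ρ : S → A → S → ℝ) (v : S → ℝ) :
    DualObj τ ρ p =
      (1 - γ) * ∑ s, ι s * v s - ∑ s, ∑ a, p s a * (v s - bellmanQ τ γ ρ v s a) := by
  have hd : ∑ s, ∑ a, p s a * v s = ∑ s, d s * v s := by simp only [← sum_mul, hsum]
  have hflow_v : ∑ s, d s * v s =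
      (1 - γ) * ∑ s, ι s * v s + γ * ∑ s, ∑ a, p s a * ∑ s', τ s a s' * v s' := by
    simp only [hflow, add_mul, sum_add_distrib, mul_sum, sum_mul, mul_assoc]
    congr 1
    rw [sum_comm]
    exact sum_congr rfl fun _ _ => sum_comm
  have hQ : ∑ s, ∑ a, p s a * bellmanQ τ γ ρ v s a =
      DualObj τ ρ p + γ * ∑ s, ∑ a, p s a * ∑ s', τ s a s' * v s' := by
    simp only [bellmanQ, DualObj, mul_add, sum_add_distrib, mul_sum, mul_left_comm]
  simp only [mul_sub, sum_sub_distrib]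
  linarith

theorem dualObj_lagrangeReward {κ : Type*} [Fintype κ] (r : S → A → S → ℝ)
    (rk : κ → S → A → S → ℝ) (w : κ → ℝ) (p : S → A → ℝ) :
    DualObj τ (lagrangeReward r rk w) p = DualObj τ r p + ∑ k, w k * DualObj τ (rk k) p := by
  simp only [DualObj, lagrangeReward, mul_add, sum_add_distrib, mul_sum]
  congr 1
  conv_rhs => rw [sum_comm]
  refine sum_congr rfl fun s _ => ?_
  conv_rhs => rw [sum_comm]
  refine sum_congr rfl fun a _ => ?_
  conv_rhs => rw [sum_comm]
  exact sum_congr rfl fun s' _ => sum_congr rfl fun k _ => by ring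

theorem dualObj_sum_smul {G : Type*} (t : Finset G) (ρ : S → A → S → ℝ) (μ : G → ℝ)
    (p : G → S → A → ℝ) :
    DualObj τ ρ (∑ g ∈ t, μ g • p g) = ∑ g ∈ t, μ g * DualObj τ ρ (p g) := by
  simp only [DualObj, Finset.sum_apply, Pi.smul_apply, smul_eq_mul, sum_mul, mul_sum, mul_assoc]
  conv_rhs => rw [sum_comm]
  refine sum_congr rfl fun s _ => ?_
  conv_rhs => rw [sum_comm]
  refine sum_congr rfl fun a _ => ?_
  conv_rhs => rw [sum_comm]

theorem convex_dualFeas :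
    Convex ℝ {x : (S → ℝ) × (S → A → ℝ) | DualFeas ι τ γ x.1 x.2} := by
  rintro ⟨d, p⟩ ⟨hsum, hflow, hp⟩ ⟨d', p'⟩ ⟨hsum', hflow', hp'⟩ a b ha hb hab
  dsimp only at hsum hflow hp hsum' hflow' hp'
  refine ⟨fun s => ?_, fun s => ?_, fun s a' => ?_⟩
  · simp [sum_add_distrib, ← mul_sum, hsum, hsum']
  · simp only [Prod.smul_mk, Prod.mk_add_mk, Pi.add_apply, Pi.smul_apply, smul_eq_mul]
    rw [hflow s, hflow' s]
    simp only [add_mul, sum_add_distrib, mul_assoc, ← mul_sum]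
    linear_combination (1 - γ) * ι s * hab
  · simpa using add_nonneg (mul_nonneg ha (hp s a')) (mul_nonneg hb (hp' s a'))

theorem exists_isVisit (hι : ∀ s, 0 ≤ ι s) (hτ0 : ∀ s a s', 0 ≤ τ s a s')
    (hτ1 : ∀ s a, ∑ s', τ s a s' = 1) (hγ0 : 0 ≤ γ) (hγ1 : γ < 1) {π : S → A → ℝ}
    (hπ : IsPolicy π) : ∃ d, 0 ≤ d ∧ IsVisit ι τ γ π d := by
  obtain ⟨d, hd0, hd⟩ := exists_nonneg_eq_add_mul_sum (fun s s' => ∑ a, π s a * τ s a s')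
    (fun s s' => sum_nonneg fun a _ => mul_nonneg (hπ.1 s a) (hτ0 s a s'))
    (fun s => by rw [sum_comm]; simp [← mul_sum, hτ1, hπ.2]) hγ0 hγ1
    (b := fun s => (1 - γ) * ι s) (fun s => mul_nonneg (by linarith) (hι s))
  refine ⟨d, hd0, fun s => (hd s).trans ?_⟩
  simp only [mul_sum, mul_assoc]

theorem IsVisit.dualFeas {π : S → A → ℝ} {d : S → ℝ} (hd : IsVisit ι τ γ π d)
    (hπ : IsPolicy π) (hd0 : 0 ≤ d) : DualFeas ι τ γ d fun s a => d s * π s a :=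
  ⟨fun s => by rw [← mul_sum, hπ.2, mul_one], hd, fun s a => mul_nonneg (hd0 s) (hπ.1 s a)⟩

theorem IsVisit.dualObj_single_eq [DecidableEq A] {g : S → A} {d : S → ℝ}
    (hd : IsVisit ι τ γ (fun s => Pi.single (g s) 1) d) {ρ : S → A → S → ℝ} {v : S → ℝ}
    (hg : ∀ s, bellmanQ τ γ ρ v s (g s) = v s) :
    DualObj τ ρ (fun s a => d s * (Pi.single (g s) (1 : ℝ) : A → ℝ) a) =
      (1 - γ) * ∑ s, ι s * v s := by
  rw [dualObj_eq_sub_sum_mul_sub_bellmanQ (fun s => by simp [← mul_sum]) hd ρ v]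
  simp [Pi.single_apply, hg]

theorem bellmanQ_eq_of_dualObj_ge {d : S → ℝ} {p : S → A → ℝ} (hfeas : DualFeas ι τ γ d p)
    {ρ : S → A → S → ℝ} {v : S → ℝ} (hQ : ∀ s a, bellmanQ τ γ ρ v s a ≤ v s)
    (hle : (1 - γ) * ∑ s, ι s * v s ≤ DualObj τ ρ p) {s : S} {a : A} (hpos : 0 < p s a) :
    bellmanQ τ γ ρ v s a = v s := by
  have hgap : ∀ s a, 0 ≤ p s a * (v s - bellmanQ τ γ ρ v s a) := fun s a =>
    mul_nonneg (hfeas.2.2 s a) (sub_nonneg.2 (hQ s a))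
  have hgap_le : p s a * (v s - bellmanQ τ γ ρ v s a) ≤ 0 := by
    rw [dualObj_eq_sub_sum_mul_sub_bellmanQ hfeas.1 hfeas.2.1 ρ v] at hle
    calc p s a * (v s - bellmanQ τ γ ρ v s a)
        ≤ ∑ a', p s a' * (v s - bellmanQ τ γ ρ v s a') :=
          single_le_sum (fun a' _ => hgap s a') (mem_univ a)
      _ ≤ ∑ s', ∑ a', p s' a' * (v s' - bellmanQ τ γ ρ v s' a') :=
          single_le_sum (f := fun s' => ∑ a', p s' a' * (v s' - bellmanQ τ γ ρ v s' a'))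
            (fun s' _ => sum_nonneg fun a' _ => hgap s' a') (mem_univ s)
      _ ≤ 0 := by linarith
  exact le_antisymm (hQ s a) (sub_nonpos.1 (nonpos_of_mul_nonpos_right hgap_le hpos))

theorem exists_dualFeas_le_dualObj [Nonempty A] {κ : Type*} [Fintype κ] (hι : ∀ s, 0 ≤ ι s)
    (hτ0 : ∀ s a s', 0 ≤ τ s a s') (hτ1 : ∀ s a, ∑ s', τ s a s' = 1) (hγ0 : 0 ≤ γ) (hγ1 : γ < 1)
    (r : S → A → S → ℝ) (rk : κ → S → A → S → ℝ) (V : κ → ℝ) (P : ℝ)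
    (hP : ∀ v w, 0 ≤ w → (∀ s a, bellmanQ τ γ (lagrangeReward r rk w) v s a ≤ v s) →
      P ≤ (1 - γ) * ∑ s, ι s * v s - ∑ k, w k * ((1 - γ) * V k)) :
    ∃ d p, (DualFeas ι τ γ d p ∧ ∀ k, (1 - γ) * V k ≤ DualObj τ (rk k) p) ∧
      P ≤ DualObj τ r p := by
  classical
  choose d hd0 hd using fun g : S → A => exists_isVisit hι hτ0 hτ1 hγ0 hγ1 (isPolicy_single g)
  set p : (S → A) → S → A → ℝ := fun g s a => d g s * (Pi.single (g s) (1 : ℝ) : A → ℝ) a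
  have hlagrange : ∀ w : κ → ℝ, 0 ≤ w → ∃ g, P ≤ DualObj τ r (p g) +
      ∑ k, w k * (DualObj τ (rk k) (p g) - (1 - γ) * V k) := fun w hw => by
    obtain ⟨v, hQv, hgreedy⟩ :=
      exists_bellman_fixedPoint hτ0 hτ1 hγ0 hγ1 (lagrangeReward r rk w)
    choose g hg using hgreedy
    have hval := (hd g).dualObj_single_eq hg
    rw [dualObj_lagrangeReward] at hval
    refine ⟨g, (hP v w hw hQv).trans_eq ?_⟩
    simp only [mul_sub, sum_sub_distrib]
    linarith
  obtain ⟨μ, hμ, hc, hR⟩ := exists_mem_stdSimplex_of_forall_exists_le _ _ P hlagrange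
  have hmix := convex_dualFeas.sum_mem (t := univ) (z := fun g => (d g, p g))
    (fun g _ => hμ.1 g) hμ.2 (fun g _ => (hd g).dualFeas (isPolicy_single g) (hd0 g))
  simp only [Prod.fst_sum, Prod.snd_sum, Prod.smul_fst, Prod.smul_snd, Set.mem_ofPred_eq] at hmix
  refine ⟨∑ g, μ g • d g, ∑ g, μ g • p g, ⟨hmix, fun k => ?_⟩, ?_⟩
  · have := hc k
    simp only [mul_sub, sum_sub_distrib, ← sum_mul, hμ.2, one_mul, sub_nonneg] at this
    rwa [dualObj_sum_smul]
  · rwa [dualObj_sum_smul]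

end Duality

theorem crl_policy_greedy_general
    {S A : Type*} [Fintype S] [Fintype A] [Nonempty A]
    (ι : S → ℝ) (τ : S → A → S → ℝ) (γ : ℝ) (r : S → A → S → ℝ)
    (hMDP : IsMDP ι τ γ)
    {K : ℕ} (rk : Fin K → S → A → S → ℝ) (V : Fin K → ℝ)
    (dStar : S → ℝ) (pStar : S → A → ℝ)
    (hDFeas : DualFeas ι τ γ dStar pStar ∧
      ∀ k, (1 - γ) * V k ≤ DualObj τ (rk k) pStar)
    (hDOpt : ∀ (d : S → ℝ) (p : S → A → ℝ),
      (DualFeas ι τ γ d p ∧ ∀ k, (1 - γ) * V k ≤ DualObj τ (rk k) p) →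
      DualObj τ r p ≤ DualObj τ r pStar)
    (vStar : S → ℝ) (qStar : S → A → ℝ) (wStar : Fin K → ℝ)
    (hPFeas : (∀ s a, qStar s a ≤ vStar s) ∧
      (∀ s a, qStar s a = ∑ s', τ s a s' *
        (r s a s' + (∑ k, wStar k * rk k s a s') + γ * vStar s')) ∧
      ∀ k, 0 ≤ wStar k)
    (hPOpt : ∀ (v : S → ℝ) (q : S → A → ℝ) (w : Fin K → ℝ),
      ((∀ s a, q s a ≤ v s) ∧
        (∀ s a, q s a = ∑ s', τ s a s' *
          (r s a s' + (∑ k, w k * rk k s a s') + γ * v s')) ∧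
        ∀ k, 0 ≤ w k) →
      (∑ s, ι s * ((1 - γ) * vStar s)) - ∑ k, wStar k * ((1 - γ) * V k) ≤
        (∑ s, ι s * ((1 - γ) * v s)) - ∑ k, w k * ((1 - γ) * V k)) :
    ∀ s a, 0 < pStar s a / dStar s → ∀ a', qStar s a' ≤ qStar s a := by
  obtain ⟨hι, -, hτ0, hτ1, hγ0, hγ1⟩ := hMDP
  obtain ⟨hqv, hq, hw⟩ := hPFeas
  have hobj : ∀ v : S → ℝ, ∑ s, ι s * ((1 - γ) * v s) = (1 - γ) * ∑ s, ι s * v s := fun v => by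
    simp only [mul_sum, mul_left_comm]
  obtain ⟨d, p, hfeas, hP⟩ := exists_dualFeas_le_dualObj (fun s => (hι s).le) hτ0 hτ1 hγ0 hγ1
    r rk V _ fun v w hw hQ => hobj v ▸ hPOpt v _ w ⟨hQ, fun _ _ => rfl, hw⟩
  have hstrong := hP.trans (hDOpt d p hfeas)
  have hle : (1 - γ) * ∑ s, ι s * vStar s ≤ DualObj τ (lagrangeReward r rk wStar) pStar := by
    have := sum_le_sum fun k (_ : k ∈ univ) => mul_le_mul_of_nonneg_left (hDFeas.2 k) (hw k)
    rw [dualObj_lagrangeReward]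
    linarith [hobj vStar]
  have hQ : ∀ s a, bellmanQ τ γ (lagrangeReward r rk wStar) vStar s a ≤ vStar s :=
    fun s a => (hq s a).symm.trans_le (hqv s a)
  intro s a hpos a'
  have hp : 0 < pStar s a :=
    (hDFeas.1.2.2 s a).lt_of_ne fun h => by rw [← h, zero_div] at hpos; exact hpos.false
  calc qStar s a' ≤ vStar s := hqv s a'
    _ = qStar s a := by rw [hq s a]; exact (bellmanQ_eq_of_dualObj_ge hDFeas.1 hQ hle hp).symm

/-- given optimal solutions of the (feasible) constrained dual and primal
LPs, the derived policy `π* = p*/d*` is greedy with respect to the optimal adjusted value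
function `q*`. -/
theorem crl_policy_greedy
    {S A : Type*} [Fintype S] [Fintype A] [Nonempty S] [Nonempty A]
    (ι : S → ℝ) (τ : S → A → S → ℝ) (γ : ℝ) (r : S → A → S → ℝ)
    (hMDP : IsMDP ι τ γ)
    {K : ℕ} (rk : Fin K → S → A → S → ℝ) (V : Fin K → ℝ)
    (dStar : S → ℝ) (pStar : S → A → ℝ)
    (hDFeas : DualFeas ι τ γ dStar pStar ∧
      ∀ k, (1 - γ) * V k ≤ DualObj τ (rk k) pStar)
    (hDOpt : ∀ (d : S → ℝ) (p : S → A → ℝ),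
      (DualFeas ι τ γ d p ∧ ∀ k, (1 - γ) * V k ≤ DualObj τ (rk k) p) →
      DualObj τ r p ≤ DualObj τ r pStar)
    (vStar : S → ℝ) (qStar : S → A → ℝ) (wStar : Fin K → ℝ)
    (hPFeas : (∀ s a, qStar s a ≤ vStar s) ∧
      (∀ s a, qStar s a = ∑ s', τ s a s' *
        (r s a s' + (∑ k, wStar k * rk k s a s') + γ * vStar s')) ∧
      ∀ k, 0 ≤ wStar k)
    (hPOpt : ∀ (v : S → ℝ) (q : S → A → ℝ) (w : Fin K → ℝ),
      ((∀ s a, q s a ≤ v s) ∧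
        (∀ s a, q s a = ∑ s', τ s a s' *
          (r s a s' + (∑ k, w k * rk k s a s') + γ * v s')) ∧
        ∀ k, 0 ≤ w k) →
      (∑ s, ι s * ((1 - γ) * vStar s)) - ∑ k, wStar k * ((1 - γ) * V k) ≤
        (∑ s, ι s * ((1 - γ) * v s)) - ∑ k, w k * ((1 - γ) * V k)) :
    ∀ s a, 0 < pStar s a / dStar s → ∀ a', qStar s a' ≤ qStar s a :=
  crl_policy_greedy_general ι τ γ r hMDP rk V dStar pStar hDFeas hDOpt vStar qStar wStar hPFeas
    hPOpt
end

section
/- Let π be a policy satisfying the visitation density bounds p_lb(s,a) ≤ p^π(s,a) ≤ p_ub(s,a) for all s,a, and let (v*, q*, r_lb*, r_ub*) be an optimal solution of the bounded policy-evaluation primal LP for π. Then r_lb*(s,a) = 0 for every (s,a) with p_lb(s,a) < p^π(s,a), and r_ub*(s,a) = 0 for every (s,a) with p^π(s,a) < p_ub(s,a); that is, the optimal modified reward is only altered at tight bounds. -/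
open Finset

/-!
Weak duality against the visitation density `p^π = d^π π`: for every primal-feasible point the
objective equals the dual value `Σ p^π R`, plus the `d^π`-weighted slack `v - Σ π q`, plus
`Σ r_lb (p^π - p_lb) + r_ub (p_ub - p^π)`, all of them nonnegative. The value function of `π`,
the fixed point of the γ-contracting Bellman operator, is feasible without reward modification
and attains the dual value, so at an optimum all these terms vanish.
-/

theorem abs_sum_mul_le_of_sum_eq_one {α : Type*} [Fintype α] {w x : α → ℝ} {C : ℝ}
    (hw0 : ∀ i, 0 ≤ w i) (hw1 : ∑ i, w i = 1) (hx : ∀ i, |x i| ≤ C) :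
    |∑ i, w i * x i| ≤ C :=
  calc |∑ i, w i * x i| ≤ ∑ i, |w i * x i| := Finset.abs_sum_le_sum_abs _ _
    _ = ∑ i, w i * |x i| := by simp only [abs_mul, abs_of_nonneg (hw0 _)]
    _ ≤ ∑ i, w i * C := by gcongr with i; exacts [hw0 i, hx i]
    _ = C := by rw [← Finset.sum_mul, hw1, one_mul]

section PolicyEvaluation

variable {S A : Type*} [Fintype S] [Fintype A]

def PrimalFeas (π : S → A → ℝ) (τ : S → A → S → ℝ) (γ : ℝ) (r : S → A → S → ℝ)
    (v : S → ℝ) (q rlb rub : S → A → ℝ) : Prop :=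
  (∀ s, ∑ a, π s a * q s a ≤ v s) ∧
  (∀ s a, q s a = ∑ s', τ s a s' * (r s a s' + rlb s a - rub s a + γ * v s')) ∧
  (∀ s a, 0 ≤ rlb s a) ∧ ∀ s a, 0 ≤ rub s a

def PrimalObj (ι : S → ℝ) (γ : ℝ) (plb pub : S → A → ℝ) (v : S → ℝ) (rlb rub : S → A → ℝ) :
    ℝ :=
  (∑ s, ι s * ((1 - γ) * v s)) - (∑ s, ∑ a, rlb s a * plb s a) + (∑ s, ∑ a, rub s a * pub s a)

variable {ι : S → ℝ} {τ : S → A → S → ℝ} {γ : ℝ} {π : S → A → ℝ} {d : S → ℝ}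

theorem exists_eq_bellman (hπ : IsPolicy π) (hτ0 : ∀ s a s', 0 ≤ τ s a s')
    (hτ1 : ∀ s a, ∑ s', τ s a s' = 1) (hγ0 : 0 ≤ γ) (hγ1 : γ < 1) (r : S → A → S → ℝ) :
    ∃ v : S → ℝ, ∀ s, v s = ∑ a, π s a * ∑ s', τ s a s' * (r s a s' + γ * v s') := by
  set T : (S → ℝ) → S → ℝ := fun v s => ∑ a, π s a * ∑ s', τ s a s' * (r s a s' + γ * v s')
  have hT : ContractingWith (⟨γ, hγ0⟩ : NNReal) T := by
    refine ⟨hγ1, LipschitzWith.of_dist_le_mul fun v w => ?_⟩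
    refine (dist_pi_le_iff (mul_nonneg hγ0 dist_nonneg)).2 fun s => ?_
    have hdiff : T v s - T w s =
        γ * ∑ a, π s a * ∑ s', τ s a s' * (v s' - w s') := by
      simp only [T, Finset.mul_sum, ← Finset.sum_sub_distrib]
      refine Finset.sum_congr rfl fun a _ => Finset.sum_congr rfl fun s' _ => by ring
    rw [Real.dist_eq, hdiff, abs_mul, abs_of_nonneg hγ0]
    gcongr
    refine abs_sum_mul_le_of_sum_eq_one (hπ.1 s) (hπ.2 s) fun a => ?_
    refine abs_sum_mul_le_of_sum_eq_one (hτ0 s a) (hτ1 s a) fun s' => ?_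
    exact dist_le_pi_dist v w s'
  exact ⟨ContractingWith.fixedPoint T hT, fun s =>
    (congrFun (ContractingWith.fixedPoint_isFixedPt (f := T) hT) s).symm⟩

theorem IsVisit.sum_mul_one_sub_mul (hV : IsVisit ι τ γ π d) (v : S → ℝ) :
    ∑ s, ι s * ((1 - γ) * v s) =
      ∑ s, d s * (v s - γ * ∑ a, π s a * ∑ s', τ s a s' * v s') := by
  have h : ∀ s, ι s * ((1 - γ) * v s) =
      d s * v s - γ * ∑ s', ∑ a', d s' * π s' a' * τ s' a' s * v s := by
    intro s
    simp only [← Finset.sum_mul]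
    linear_combination -v s * hV s
  simp only [h, mul_sub, Finset.sum_sub_distrib, Finset.mul_sum]
  congr 1
  rw [Finset.sum_comm]
  refine Finset.sum_congr rfl fun s _ => ?_
  rw [Finset.sum_comm]
  refine Finset.sum_congr rfl fun a _ => Finset.sum_congr rfl fun s' _ => by ring

theorem IsVisit.primalObj_eq (hV : IsVisit ι τ γ π d) (hτ1 : ∀ s a, ∑ s', τ s a s' = 1)
    (r : S → A → S → ℝ) (plb pub : S → A → ℝ) {v : S → ℝ} {q rlb rub : S → A → ℝ}
    (hq : ∀ s a, q s a = ∑ s', τ s a s' * (r s a s' + rlb s a - rub s a + γ * v s')) :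
    PrimalObj ι γ plb pub v rlb rub =
      DualObj τ r (fun s a => d s * π s a) + ∑ s, d s * (v s - ∑ a, π s a * q s a) +
        ∑ s, ∑ a, (rlb s a * (d s * π s a - plb s a) + rub s a * (pub s a - d s * π s a)) := by
  have hq' : ∀ s a, q s a =
      ∑ s', τ s a s' * r s a s' + rlb s a - rub s a + γ * ∑ s', τ s a s' * v s' := by
    intro s a
    simp only [hq, mul_add, mul_sub, Finset.sum_add_distrib, Finset.sum_sub_distrib,
      ← Finset.sum_mul, hτ1, one_mul, Finset.mul_sum, mul_left_comm γ]
  rw [PrimalObj, hV.sum_mul_one_sub_mul]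
  simp only [DualObj, hq', Finset.mul_sum, mul_sub, mul_add,
    Finset.sum_sub_distrib, Finset.sum_add_distrib, mul_comm, mul_left_comm]
  ring

theorem IsVisit.exists_primalFeas_primalObj_eq_dualObj (hV : IsVisit ι τ γ π d)
    (hπ : IsPolicy π) (hτ0 : ∀ s a s', 0 ≤ τ s a s') (hτ1 : ∀ s a, ∑ s', τ s a s' = 1)
    (hγ0 : 0 ≤ γ) (hγ1 : γ < 1) (r : S → A → S → ℝ) (plb pub : S → A → ℝ) :
    ∃ (v : S → ℝ) (q : S → A → ℝ), PrimalFeas π τ γ r v q 0 0 ∧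
      PrimalObj ι γ plb pub v 0 0 = DualObj τ r (fun s a => d s * π s a) := by
  obtain ⟨v, hv⟩ := exists_eq_bellman hπ hτ0 hτ1 hγ0 hγ1 r
  have hq : ∀ s a, ∑ s', τ s a s' * (r s a s' + γ * v s') =
      ∑ s', τ s a s' * (r s a s' + (0 : S → A → ℝ) s a - (0 : S → A → ℝ) s a + γ * v s') := by
    simp only [Pi.zero_apply, add_zero, sub_zero, implies_true]
  refine ⟨v, fun s a => ∑ s', τ s a s' * (r s a s' + γ * v s'),
    ⟨fun s => (hv s).ge, hq, fun _ _ => le_rfl, fun _ _ => le_rfl⟩, ?_⟩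
  simp only [hV.primalObj_eq hτ1 r plb pub hq, ← hv, sub_self, mul_zero, Pi.zero_apply,
    zero_mul, add_zero, Finset.sum_const_zero]

theorem IsVisit.reward_slack_eq_zero_of_primalObj_le_dualObj (hV : IsVisit ι τ γ π d)
    (hτ1 : ∀ s a, ∑ s', τ s a s' = 1) (hd : ∀ s, 0 ≤ d s) {r : S → A → S → ℝ}
    {plb pub : S → A → ℝ} (hlb : ∀ s a, plb s a ≤ d s * π s a)
    (hub : ∀ s a, d s * π s a ≤ pub s a) {v : S → ℝ} {q rlb rub : S → A → ℝ}
    (hF : PrimalFeas π τ γ r v q rlb rub)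
    (hle : PrimalObj ι γ plb pub v rlb rub ≤ DualObj τ r (fun s a => d s * π s a)) :
    ∀ s a, rlb s a * (d s * π s a - plb s a) = 0 ∧ rub s a * (pub s a - d s * π s a) = 0 := by
  obtain ⟨hvq, hq, hrlb, hrub⟩ := hF
  have hslack_nonneg : ∀ s a,
      0 ≤ rlb s a * (d s * π s a - plb s a) ∧ 0 ≤ rub s a * (pub s a - d s * π s a) :=
    fun s a => ⟨mul_nonneg (hrlb s a) (sub_nonneg.2 (hlb s a)),
      mul_nonneg (hrub s a) (sub_nonneg.2 (hub s a))⟩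
  have hsum_nonneg : ∀ s a,
      0 ≤ rlb s a * (d s * π s a - plb s a) + rub s a * (pub s a - d s * π s a) :=
    fun s a => add_nonneg (hslack_nonneg s a).1 (hslack_nonneg s a).2
  have hvalue : 0 ≤ ∑ s, d s * (v s - ∑ a, π s a * q s a) :=
    Finset.sum_nonneg fun s _ => mul_nonneg (hd s) (sub_nonneg.2 (hvq s))
  rw [hV.primalObj_eq hτ1 r plb pub hq] at hle
  have hzero : ∑ s, ∑ a,
      (rlb s a * (d s * π s a - plb s a) + rub s a * (pub s a - d s * π s a)) = 0 :=
    le_antisymm (by linarith)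
      (Finset.sum_nonneg fun s _ => Finset.sum_nonneg fun a _ => hsum_nonneg s a)
  intro s a
  have hs := (Fintype.sum_eq_zero_iff_of_nonneg fun s =>
    Finset.sum_nonneg fun a _ => hsum_nonneg s a).1 hzero
  have hsa := (Fintype.sum_eq_zero_iff_of_nonneg (hsum_nonneg s)).1 (congrFun hs s)
  exact (add_eq_zero_iff_of_nonneg (hslack_nonneg s a).1 (hslack_nonneg s a).2).1
    (congrFun hsa a)

end PolicyEvaluation

theorem vdb_reward_modifications_tight_only_general
    {S A : Type*} [Fintype S] [Fintype A]
    (ι : S → ℝ) (τ : S → A → S → ℝ) (γ : ℝ) (r : S → A → S → ℝ)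
    (hMDP : IsMDP ι τ γ)
    (plb pub : S → A → ℝ) (hb0 : ∀ s a, 0 ≤ plb s a)
    (π : S → A → ℝ) (hPol : IsPolicy π)
    (dπ : S → ℝ) (hVisit : IsVisit ι τ γ π dπ)
    (hSat : ∀ s a, plb s a ≤ dπ s * π s a ∧ dπ s * π s a ≤ pub s a)
    (vStar : S → ℝ) (qStar rlbStar rubStar : S → A → ℝ)
    (hFeas : (∀ s, ∑ a, π s a * qStar s a ≤ vStar s) ∧
      (∀ s a, qStar s a = ∑ s', τ s a s' *
        (r s a s' + rlbStar s a - rubStar s a + γ * vStar s')) ∧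
      (∀ s a, 0 ≤ rlbStar s a) ∧ ∀ s a, 0 ≤ rubStar s a)
    (hOpt : ∀ (v : S → ℝ) (q rlb rub : S → A → ℝ),
      ((∀ s, ∑ a, π s a * q s a ≤ v s) ∧
        (∀ s a, q s a = ∑ s', τ s a s' *
          (r s a s' + rlb s a - rub s a + γ * v s')) ∧
        (∀ s a, 0 ≤ rlb s a) ∧ ∀ s a, 0 ≤ rub s a) →
      (∑ s, ι s * ((1 - γ) * vStar s)) - (∑ s, ∑ a, rlbStar s a * plb s a) +
          (∑ s, ∑ a, rubStar s a * pub s a) ≤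
        (∑ s, ι s * ((1 - γ) * v s)) - (∑ s, ∑ a, rlb s a * plb s a) +
          (∑ s, ∑ a, rub s a * pub s a)) :
    (∀ s a, plb s a < dπ s * π s a → rlbStar s a = 0) ∧
    (∀ s a, dπ s * π s a < pub s a → rubStar s a = 0) := by
  obtain ⟨-, -, hτ0, hτ1, hγ0, hγ1⟩ := hMDP
  have hd : ∀ s, 0 ≤ dπ s := fun s => by
    simpa only [← Finset.mul_sum, hPol.2 s, mul_one] using
      Finset.sum_nonneg fun a (_ : a ∈ univ) => (hb0 s a).trans (hSat s a).1
  obtain ⟨v, q, hF, hObj⟩ :=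
    hVisit.exists_primalFeas_primalObj_eq_dualObj hPol hτ0 hτ1 hγ0 hγ1 r plb pub
  have hslack := hVisit.reward_slack_eq_zero_of_primalObj_le_dualObj hτ1 hd
    (fun s a => (hSat s a).1) (fun s a => (hSat s a).2) hFeas
    ((hOpt v q 0 0 hF).trans_eq hObj)
  refine ⟨fun s a hlt => ?_, fun s a hlt => ?_⟩
  · exact (mul_eq_zero.1 (hslack s a).1).resolve_right (sub_ne_zero.2 hlt.ne')
  · exact (mul_eq_zero.1 (hslack s a).2).resolve_right (sub_ne_zero.2 hlt.ne')

/-- if the policy `π` satisfies the visitation density bounds, then an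
optimal solution of the bounded policy-evaluation primal LP for `π` has vanishing reward
modifications at all non-tight bounds: `r_lb*(s,a) = 0` wherever `p_lb(s,a) < p^π(s,a)`
and `r_ub*(s,a) = 0` wherever `p^π(s,a) < p_ub(s,a)`. -/
theorem vdb_reward_modifications_tight_only
    {S A : Type*} [Fintype S] [Fintype A] [Nonempty S] [Nonempty A]
    (ι : S → ℝ) (τ : S → A → S → ℝ) (γ : ℝ) (r : S → A → S → ℝ)
    (hMDP : IsMDP ι τ γ)
    (plb pub : S → A → ℝ) (hb0 : ∀ s a, 0 ≤ plb s a) (hb1 : ∀ s a, plb s a ≤ pub s a)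
    (π : S → A → ℝ) (hPol : IsPolicy π)
    (dπ : S → ℝ) (hVisit : IsVisit ι τ γ π dπ)
    (hSat : ∀ s a, plb s a ≤ dπ s * π s a ∧ dπ s * π s a ≤ pub s a)
    (vStar : S → ℝ) (qStar rlbStar rubStar : S → A → ℝ)
    (hFeas : (∀ s, ∑ a, π s a * qStar s a ≤ vStar s) ∧
      (∀ s a, qStar s a = ∑ s', τ s a s' *
        (r s a s' + rlbStar s a - rubStar s a + γ * vStar s')) ∧
      (∀ s a, 0 ≤ rlbStar s a) ∧ ∀ s a, 0 ≤ rubStar s a)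
    (hOpt : ∀ (v : S → ℝ) (q rlb rub : S → A → ℝ),
      ((∀ s, ∑ a, π s a * q s a ≤ v s) ∧
        (∀ s a, q s a = ∑ s', τ s a s' *
          (r s a s' + rlb s a - rub s a + γ * v s')) ∧
        (∀ s a, 0 ≤ rlb s a) ∧ ∀ s a, 0 ≤ rub s a) →
      (∑ s, ι s * ((1 - γ) * vStar s)) - (∑ s, ∑ a, rlbStar s a * plb s a) +
          (∑ s, ∑ a, rubStar s a * pub s a) ≤
        (∑ s, ι s * ((1 - γ) * v s)) - (∑ s, ∑ a, rlb s a * plb s a) +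
          (∑ s, ∑ a, rub s a * pub s a)) :
    (∀ s a, plb s a < dπ s * π s a → rlbStar s a = 0) ∧
    (∀ s a, dπ s * π s a < pub s a → rubStar s a = 0) :=
  vdb_reward_modifications_tight_only_general ι τ γ r hMDP plb pub hb0 π hPol dπ hVisit hSat vStar
    qStar rlbStar rubStar hFeas hOpt
end

section
/- Assume the action-density-bounded dual LP is feasible. Let (d*, p*) be an optimal solution of the action-density-bounded dual LP. Then d*(s) > 0 for every state s, and the policy π*(a|s) = p*(s,a)/d*(s) satisfies π_lb(a|s) ≤ π*(a|s) ≤ π_ub(a|s) for all s,a and maximizes the average reward ρ^π among all policies satisfying these action density bounds. -/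
open Finset

lemma visit_nonneg {S A : Type*} [Fintype S] [Fintype A]
    (ι : S → ℝ) (τ : S → A → S → ℝ) (γ : ℝ) (hMDP : IsMDP ι τ γ)
    (π : S → A → ℝ) (d : S → ℝ) (hπ : IsPolicy π) (hvis : IsVisit ι τ γ π d) :
    ∀ s, 0 ≤ d s := by
  obtain ⟨hι, hιsum, hτ0, hτ1, hγ0, hγ1⟩ := hMDP
  set q : S → S → ℝ := fun s' s => ∑ a, π s' a * τ s' a s with hqdef
  have hq0 : ∀ s' s, 0 ≤ q s' s := fun s' s =>
    Finset.sum_nonneg fun a _ => mul_nonneg (hπ.1 s' a) (hτ0 s' a s)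
  have hq1 : ∀ s', ∑ s, q s' s = 1 := by
    intro s'
    rw [hqdef]
    simp only
    rw [Finset.sum_comm]
    calc ∑ a, ∑ s, π s' a * τ s' a s = ∑ a, π s' a * ∑ s, τ s' a s := by
          simp [Finset.mul_sum]
      _ = 1 := by simp [hτ1, hπ.2 s']
  set T : (S → ℝ) → (S → ℝ) := fun x s => ∑ s', x s' * q s' s with hTdef
  have hd : ∀ s, d s = (1 - γ) * ι s + γ * T d s := by
    intro s
    rw [hvis s]
    congr 1
    congr 1
    rw [hTdef]
    simp only [hqdef]
    rw [Finset.sum_congr rfl]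
    intro s' _
    rw [Finset.mul_sum]
    exact Finset.sum_congr rfl fun a _ => by ring
  -- T preserves nonnegativity
  have hTnn : ∀ x : S → ℝ, (∀ s, 0 ≤ x s) → ∀ s, 0 ≤ T x s := by
    intro x hx s
    exact Finset.sum_nonneg fun s' _ => mul_nonneg (hx s') (hq0 s' s)
  -- T is ℓ1-nonexpansive
  have hl1 : ∀ x : S → ℝ, ∑ s, |T x s| ≤ ∑ s', |x s'| := by
    intro x
    calc ∑ s, |T x s| ≤ ∑ s, ∑ s', |x s'| * q s' s := by
          apply Finset.sum_le_sum
          intro s _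
          calc |T x s| ≤ ∑ s', |x s' * q s' s| := Finset.abs_sum_le_sum_abs _ _
            _ = ∑ s', |x s'| * q s' s := by
                exact Finset.sum_congr rfl fun s' _ => by
                  rw [abs_mul, abs_of_nonneg (hq0 s' s)]
      _ = ∑ s', |x s'| * ∑ s, q s' s := by rw [Finset.sum_comm]; simp [Finset.mul_sum]
      _ = ∑ s', |x s'| := by simp [hq1]
  -- linearity of T iterates
  have hTlin : ∀ n (x y : S → ℝ) (a b : ℝ),
      T^[n] (fun s => a * x s + b * y s) = fun s => a * T^[n] x s + b * T^[n] y s := by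
    intro n
    induction n with
    | zero => intro x y a b; simp
    | succ n ih =>
        intro x y a b
        rw [Function.iterate_succ_apply, Function.iterate_succ_apply,
          Function.iterate_succ_apply]
        have : T (fun s => a * x s + b * y s) = fun s => a * T x s + b * T y s := by
          funext s
          simp only [hTdef, add_mul, mul_assoc, Finset.sum_add_distrib, Finset.mul_sum]
        rw [this, ih]
  have hTιnn : ∀ n s, 0 ≤ T^[n] ι s := by
    intro n
    induction n with
    | zero => intro s; exact le_of_lt (hι s)
    | succ n ih =>
        intro s
        rw [Function.iterate_succ_apply']
        exact hTnn _ ih s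
  have hTdl1 : ∀ n, ∑ s, |T^[n] d s| ≤ ∑ s, |d s| := by
    intro n
    induction n with
    | zero => simp
    | succ n ih =>
        calc ∑ s, |T^[n+1] d s| = ∑ s, |T (T^[n] d) s| := by
              simp [Function.iterate_succ_apply']
          _ ≤ ∑ s, |T^[n] d s| := hl1 _
          _ ≤ ∑ s, |d s| := ih
  -- main decomposition
  have key : ∀ n, ∃ u : S → ℝ, (∀ s, 0 ≤ u s) ∧ ∀ s, d s = u s + γ ^ n * T^[n] d s := by
    intro n
    induction n with
    | zero => exact ⟨fun _ => 0, fun _ => le_refl 0, fun s => by simp⟩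
    | succ n ih =>
        obtain ⟨u, hu, heq⟩ := ih
        refine ⟨fun s => u s + γ ^ n * ((1 - γ) * T^[n] ι s), ?_, ?_⟩
        · intro s
          exact add_nonneg (hu s) (mul_nonneg (pow_nonneg hγ0 n)
            (mul_nonneg (by linarith) (hTιnn n s)))
        · intro s
          have hdfun : d = fun s => (1 - γ) * ι s + γ * T d s := funext hd
          have h2 : T^[n] d s = (1 - γ) * T^[n] ι s + γ * T^[n] (T d) s := by
            conv_lhs => rw [hdfun]
            rw [hTlin n ι (T d) (1 - γ) γ]
          rw [heq s, h2, Function.iterate_succ_apply]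
          ring
  -- conclude
  intro s
  set C := ∑ s', |d s'| with hC
  have hbound : ∀ n : ℕ, -(γ ^ n * C) ≤ d s := by
    intro n
    obtain ⟨u, hu, heq⟩ := key n
    have h1 : |T^[n] d s| ≤ C := by
      calc |T^[n] d s| ≤ ∑ s', |T^[n] d s'| :=
            Finset.single_le_sum (f := fun s' => |T^[n] d s'|) (fun s' _ => abs_nonneg _) (Finset.mem_univ s)
        _ ≤ C := hTdl1 n
    have h2 : -C ≤ T^[n] d s := neg_le_of_abs_le h1
    have h3 : γ ^ n * (-C) ≤ γ ^ n * T^[n] d s :=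
      mul_le_mul_of_nonneg_left h2 (pow_nonneg hγ0 n)
    have h4 : γ ^ n * T^[n] d s ≤ d s := by
      rw [heq s]; linarith [hu s]
    nlinarith
  have ht : Filter.Tendsto (fun n : ℕ => -(γ ^ n * C)) Filter.atTop (nhds 0) := by
    have h0 : Filter.Tendsto (fun n : ℕ => γ ^ n) Filter.atTop (nhds 0) :=
      tendsto_pow_atTop_nhds_zero_of_lt_one hγ0 hγ1
    have := (h0.mul_const C).neg
    simpa using this
  exact le_of_tendsto' ht hbound

/-- an optimal solution `(d*, p*)` of the (feasible)
action-density-bounded dual LP has `d* > 0` everywhere, and the derived policy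
`π* = p*/d*` satisfies the action density bounds and maximizes the average reward among
all policies satisfying them. -/
theorem adb_dual_gives_optimal_policy
    {S A : Type*} [Fintype S] [Fintype A] [Nonempty S] [Nonempty A]
    (ι : S → ℝ) (τ : S → A → S → ℝ) (γ : ℝ) (r : S → A → S → ℝ)
    (hMDP : IsMDP ι τ γ)
    (πlb πub : S → A → ℝ) (hlb0 : ∀ s a, 0 ≤ πlb s a)
    (hlb1 : ∀ s, ∑ a, πlb s a ≤ 1) (hub1 : ∀ s, 1 ≤ ∑ a, πub s a)
    (dStar : S → ℝ) (pStar : S → A → ℝ)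
    (hFeas : DualFeas ι τ γ dStar pStar ∧
      ∀ s a, dStar s * πlb s a ≤ pStar s a ∧ pStar s a ≤ dStar s * πub s a)
    (hOpt : ∀ (d : S → ℝ) (p : S → A → ℝ),
      (DualFeas ι τ γ d p ∧
        ∀ s a, d s * πlb s a ≤ p s a ∧ p s a ≤ d s * πub s a) →
      DualObj τ r p ≤ DualObj τ r pStar) :
    (∀ s, 0 < dStar s) ∧
    IsPolicy (fun s a => pStar s a / dStar s) ∧
    IsVisit ι τ γ (fun s a => pStar s a / dStar s) dStar ∧
    (∀ s a, πlb s a ≤ pStar s a / dStar s ∧ pStar s a / dStar s ≤ πub s a) ∧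
    (∀ (π : S → A → ℝ) (d : S → ℝ), IsPolicy π → IsVisit ι τ γ π d →
      (∀ s a, πlb s a ≤ π s a ∧ π s a ≤ πub s a) →
      DualObj τ r (fun s a => d s * π s a) ≤ DualObj τ r pStar) := by
  obtain ⟨⟨hsum, heq, hp0⟩, hbds⟩ := hFeas
  obtain ⟨hι, hιsum, hτ0, hτ1, hγ0, hγ1⟩ := hMDP
  have hdpos : ∀ s, 0 < dStar s := by
    intro s
    rw [heq s]
    have h1 : 0 ≤ ∑ s', ∑ a', pStar s' a' * τ s' a' s :=
      Finset.sum_nonneg fun s' _ => Finset.sum_nonneg fun a' _ =>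
        mul_nonneg (hp0 s' a') (hτ0 s' a' s)
    have h2 : 0 < (1 - γ) * ι s := mul_pos (by linarith) (hι s)
    nlinarith
  have hdne : ∀ s, dStar s ≠ 0 := fun s => ne_of_gt (hdpos s)
  refine ⟨hdpos, ⟨?_, ?_⟩, ?_, ?_, ?_⟩
  · intro s a
    exact div_nonneg (hp0 s a) (le_of_lt (hdpos s))
  · intro s
    rw [← Finset.sum_div, hsum s, div_self (hdne s)]
  · intro s
    have hcancel : ∀ s' a', dStar s' * (pStar s' a' / dStar s') * τ s' a' s
        = pStar s' a' * τ s' a' s := by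
      intro s' a'
      rw [mul_div_assoc', mul_div_cancel_left₀ _ (hdne s')]
    simp only [hcancel]
    exact heq s
  · intro s a
    constructor
    · rw [le_div_iff₀ (hdpos s)]
      calc πlb s a * dStar s = dStar s * πlb s a := by ring
        _ ≤ pStar s a := (hbds s a).1
    · rw [div_le_iff₀ (hdpos s)]
      calc pStar s a ≤ dStar s * πub s a := (hbds s a).2
        _ = πub s a * dStar s := by ring
  · intro π d hπ hvis hbd
    have hdnn : ∀ s, 0 ≤ d s :=
      visit_nonneg ι τ γ ⟨hι, hιsum, hτ0, hτ1, hγ0, hγ1⟩ π d hπ hvis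
    apply hOpt d
    refine ⟨⟨?_, ?_, ?_⟩, ?_⟩
    · intro s
      rw [← Finset.mul_sum, hπ.2 s, mul_one]
    · intro s
      exact hvis s
    · intro s a
      exact mul_nonneg (hdnn s) (hπ.1 s a)
    · intro s a
      exact ⟨mul_le_mul_of_nonneg_left (hbd s a).1 (hdnn s),
        mul_le_mul_of_nonneg_left (hbd s a).2 (hdnn s)⟩
end
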